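/- (Proposition 1) Let X be a finite set of pixel locations, let C = Fin 3 index the three color channels, and let Ω : X → Finset X assign to every pixel x a nonempty local patch Ω(x). Let O, B, R, B̄, R̄ : C → X → ℝ be multichannel images satisfying, for every channel c ∈ C and pixel y ∈ X: (i) the decompositions O_c(y) = B_c(y) + R_c(y) and O_c(y) = B̄_c(y) + R̄_c(y); (ii) R_c(y) ≤ R̄_c(y); and (iii) B_c(y) ≤ 1. Define the bright-channel images J(x) = max_{y ∈ Ω(x)} max_{c ∈ C} B_c(y) and J̄(x) = max_{y ∈ Ω(x)} max_{c ∈ C} B̄_c(y). Then ‖1 − J‖₀ ≤ ‖1 − J̄‖₀, i.e. the number of pixels x with J(x) ≠ 1 is at most the number of pixels x with J̄(x) ≠ 1; equivalently, the image derained channel-wisely has at least as many brightest pixels as the image derained without distinguishing color channels. -/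

import Mathlib

/-! Since `O = B + R = B̄ + R̄` and `R ≤ R̄`, we get `B̄ ≤ B` in every channel, hence `J̄ ≤ J ≤ 1`
for the monotone bright channel; so every pixel with `J̄ = 1` also has `J = 1`. -/

open Finset

section BrightChannel

variable {X ι α : Type*} [Fintype ι] [Nonempty ι] [LinearOrder α]

def brightChannel (Ω : X → Finset X) (hΩ : ∀ x, (Ω x).Nonempty) (B : ι → X → α) (x : X) : α :=
  (Ω x).sup' (hΩ x) fun y => univ.sup' univ_nonempty fun c => B c y

variable (Ω : X → Finset X) (hΩ : ∀ x, (Ω x).Nonempty)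

theorem brightChannel_mono {B B' : ι → X → α} (h : ∀ c y, B c y ≤ B' c y) (x : X) :
    brightChannel Ω hΩ B x ≤ brightChannel Ω hΩ B' x :=
  sup'_mono_fun fun y _ => sup'_mono_fun fun c _ => h c y

theorem brightChannel_le {B : ι → X → α} {a : α} (h : ∀ c y, B c y ≤ a) (x : X) :
    brightChannel Ω hΩ B x ≤ a :=
  sup'_le _ _ fun y _ => sup'_le _ _ fun c _ => h c y

end BrightChannel

theorem ncard_setOf_ne_le_of_le {X α : Type*} [Finite X] [PartialOrder α] {f g : X → α} {a : α}
    (hgf : ∀ x, g x ≤ f x) (hfa : ∀ x, f x ≤ a) :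
    {x | f x ≠ a}.ncard ≤ {x | g x ≠ a}.ncard := by
  refine Set.ncard_le_ncard (fun x hfx hgx => hfx ?_) (Set.toFinite _)
  exact le_antisymm (hfa x) (hgx ▸ hgf x)

/-- **Proposition 1.** Let `O = B + R = B̄ + R̄` channel-wise, with
`R_c ≤ R̄_c` pointwise and `B_c ≤ 1` pointwise, on a finite pixel set `X` with
channels `Fin 3` and nonempty patches `Ω(x)`.  With bright channels
`J(x) = max_{y ∈ Ω(x)} max_c B_c(y)` and `J̄(x) = max_{y ∈ Ω(x)} max_c B̄_c(y)`,
we have `‖1 − J‖₀ ≤ ‖1 − J̄‖₀`: the channel-wisely derained image has at least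
as many brightest pixels as the channel-agnostically derained one. -/
theorem channelwise_deraining_brightest_pixels {X : Type*} [Fintype X]
    (Ω : X → Finset X) (hΩ : ∀ x : X, (Ω x).Nonempty)
    (O B R Bbar Rbar : Fin 3 → X → ℝ)
    (hBR : ∀ (c : Fin 3) (y : X), O c y = B c y + R c y)
    (hBbarRbar : ∀ (c : Fin 3) (y : X), O c y = Bbar c y + Rbar c y)
    (hR : ∀ (c : Fin 3) (y : X), R c y ≤ Rbar c y)
    (hB1 : ∀ (c : Fin 3) (y : X), B c y ≤ 1) :
    Set.ncard {x : X |
        1 - (Ω x).sup' (hΩ x)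
          (fun y => Finset.univ.sup' Finset.univ_nonempty fun c : Fin 3 => B c y) ≠ 0}
      ≤ Set.ncard {x : X |
        1 - (Ω x).sup' (hΩ x)
          (fun y => Finset.univ.sup' Finset.univ_nonempty fun c : Fin 3 => Bbar c y) ≠ 0} := by
  have hBbar_le_B : ∀ c y, Bbar c y ≤ B c y := fun c y => by
    linarith [hBR c y, hBbarRbar c y, hR c y]
  simp only [sub_ne_zero, ne_comm (a := (1 : ℝ))]
  exact ncard_setOf_ne_le_of_le (f := brightChannel Ω hΩ B) (g := brightChannel Ω hΩ Bbar)
    (brightChannel_mono Ω hΩ hBbar_le_B) (brightChannel_le Ω hΩ hB1)
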